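/- arXiv:2405.15819 — 7 statements merged into one kernel-verified Lean document; each statement's English description precedes it below -/
import Mathlib

section
/- Assume A_m ≠ 0 and D_k ≠ 0. Let 𝒜 be the set of triples (X, Y, v) with X, Y ∈ ℂ^{mn×mn}, v ∈ ℂ^m such that the pencil λX+Y is in L₁(A) with right ansatz vector v, and let 𝒟 be the set of triples (P, Q, w) with P, Q ∈ ℂ^{kr×kr}, w ∈ ℂ^k such that λP+Q is in L₁(D) with right ansatz vector w. Then 𝒜 and 𝒟 are ℂ-linear subspaces, and the linear map sending ((X,Y,v),(P,Q,w)) to the pair (𝕏,𝕐) defined by the (mn+kr)×(mn+kr) block matrices 𝕏 = [[X, 0],[0, P]] and 𝕐 = [[Y, −v e_kᵀ ⊗ B],[w e_mᵀ ⊗ C, Q]] is injective; its image is exactly the set of pencils belonging to 𝕃₁(G) (for some ansatz vectors), so 𝕃₁(G) is linearly isomorphic to L₁(A) × L₁(D). -/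
open Matrix Finset

noncomputable section

/-- `Λ_{p-1}(λ) = (λ^{p-1}, …, λ, 1)ᵀ` as a vector in `ℂ^p`. -/
def Lam (p : ℕ) (lam : ℂ) : Fin p → ℂ := fun i => lam ^ (p - 1 - (i : ℕ))

/-- the standard basis vector of `ℂ^a` with a `1` in (0-indexed) position `j`. -/
def eVec (a j : ℕ) : Fin a → ℂ := fun i => if (i : ℕ) = j then 1 else 0

/-- evaluation at `lam` of the matrix polynomial with coefficients `Pc 0, …, Pc d`. -/
def polyEval {d n : ℕ} (Pc : Fin (d + 1) → Matrix (Fin n) (Fin n) ℂ) (lam : ℂ) :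
    Matrix (Fin n) (Fin n) ℂ := ∑ j : Fin (d + 1), lam ^ (j : ℕ) • Pc j

/-- Kronecker product `v ⊗ M` of a column vector `v ∈ ℂ^a` with a matrix `M`. -/
def vKron {a : ℕ} {α β : Type*} (v : Fin a → ℂ) (M : Matrix α β ℂ) :
    Matrix (Fin a × α) β ℂ := fun i j => v i.1 * M i.2 j

/-- Kronecker product `vᵀ ⊗ M` of a row vector with a matrix `M`. -/
def rKron {a : ℕ} {α β : Type*} (v : Fin a → ℂ) (M : Matrix α β ℂ) :
    Matrix α (Fin a × β) ℂ := fun i j => v j.1 * M i j.2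

/-- Kronecker product `v wᵀ ⊗ M`. -/
def oKron {a b : ℕ} {α β : Type*} (v : Fin a → ℂ) (w : Fin b → ℂ) (M : Matrix α β ℂ) :
    Matrix (Fin a × α) (Fin b × β) ℂ := fun i j => v i.1 * w j.1 * M i.2 j.2

/-- the pencil `λX + Y` is in `L₁(P)` with right ansatz vector `v`. -/
def InL1 {d n : ℕ} (Pc : Fin (d + 1) → Matrix (Fin n) (Fin n) ℂ)
    (X Y : Matrix (Fin d × Fin n) (Fin d × Fin n) ℂ) (v : Fin d → ℂ) : Prop :=
  ∀ lam : ℂ, (lam • X + Y) * vKron (Lam d lam) (1 : Matrix (Fin n) (Fin n) ℂ)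
      = vKron v (polyEval Pc lam)

/-- the pencil `λX + Y` is in `L₂(P)` with left ansatz vector `s`. -/
def InL2 {d n : ℕ} (Pc : Fin (d + 1) → Matrix (Fin n) (Fin n) ℂ)
    (X Y : Matrix (Fin d × Fin n) (Fin d × Fin n) ℂ) (s : Fin d → ℂ) : Prop :=
  ∀ lam : ℂ, rKron (Lam d lam) (1 : Matrix (Fin n) (Fin n) ℂ) * (lam • X + Y)
      = rKron s (polyEval Pc lam)

/-- the pencil `λ𝕏 + 𝕐` is in `𝕃₁(G)` with ansatz vectors `(v, w)`. -/
def InBL1 {m k n r : ℕ} (Ac : Fin (m + 1) → Matrix (Fin n) (Fin n) ℂ)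
    (Dc : Fin (k + 1) → Matrix (Fin r) (Fin r) ℂ)
    (B : Matrix (Fin n) (Fin r) ℂ) (C : Matrix (Fin r) (Fin n) ℂ)
    (XX YY : Matrix ((Fin m × Fin n) ⊕ (Fin k × Fin r)) ((Fin m × Fin n) ⊕ (Fin k × Fin r)) ℂ)
    (v : Fin m → ℂ) (w : Fin k → ℂ) : Prop :=
  ∃ (X Y : Matrix (Fin m × Fin n) (Fin m × Fin n) ℂ)
    (P Q : Matrix (Fin k × Fin r) (Fin k × Fin r) ℂ),
      InL1 Ac X Y v ∧ InL1 Dc P Q w ∧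
      XX = Matrix.fromBlocks X 0 0 P ∧
      YY = Matrix.fromBlocks Y (-(oKron v (eVec k (k - 1)) B)) (oKron w (eVec m (m - 1)) C) Q

/-- the pencil `λ𝕏 + 𝕐` is in `𝕃₂(G)` with ansatz vectors `(s, z)`. -/
def InBL2 {m k n r : ℕ} (Ac : Fin (m + 1) → Matrix (Fin n) (Fin n) ℂ)
    (Dc : Fin (k + 1) → Matrix (Fin r) (Fin r) ℂ)
    (B : Matrix (Fin n) (Fin r) ℂ) (C : Matrix (Fin r) (Fin n) ℂ)
    (XX YY : Matrix ((Fin m × Fin n) ⊕ (Fin k × Fin r)) ((Fin m × Fin n) ⊕ (Fin k × Fin r)) ℂ)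
    (s : Fin m → ℂ) (z : Fin k → ℂ) : Prop :=
  ∃ (X Y : Matrix (Fin m × Fin n) (Fin m × Fin n) ℂ)
    (P Q : Matrix (Fin k × Fin r) (Fin k × Fin r) ℂ),
      InL2 Ac X Y s ∧ InL2 Dc P Q z ∧
      XX = Matrix.fromBlocks X 0 0 P ∧
      YY = Matrix.fromBlocks Y (-(oKron (eVec m (m - 1)) z B)) (oKron (eVec k (k - 1)) s C) Q

/-- the transfer function `G(λ) = D(λ) + C A(λ)⁻¹ B`. -/
def Gmat {m k n r : ℕ} (Ac : Fin (m + 1) → Matrix (Fin n) (Fin n) ℂ)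
    (Dc : Fin (k + 1) → Matrix (Fin r) (Fin r) ℂ)
    (B : Matrix (Fin n) (Fin r) ℂ) (C : Matrix (Fin r) (Fin n) ℂ) (lam : ℂ) :
    Matrix (Fin r) (Fin r) ℂ :=
  polyEval Dc lam + C * (polyEval Ac lam)⁻¹ * B

/-- a triple `(X, Y, v)` representing a candidate pencil `λX + Y` with ansatz vector `v`. -/
abbrev Trip (d n : ℕ) :=
  Matrix (Fin d × Fin n) (Fin d × Fin n) ℂ ×
    Matrix (Fin d × Fin n) (Fin d × Fin n) ℂ × (Fin d → ℂ)

/-- the map sending `((X, Y, v), (P, Q, w))` to the block pencil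
`(𝕏, 𝕐) = ([[X,0],[0,P]], [[Y, −v e_kᵀ ⊗ B],[w e_mᵀ ⊗ C, Q]])`. -/
def PsiMap {m k n r : ℕ} (B : Matrix (Fin n) (Fin r) ℂ) (C : Matrix (Fin r) (Fin n) ℂ)
    (t : Trip m n × Trip k r) :
    Matrix ((Fin m × Fin n) ⊕ (Fin k × Fin r)) ((Fin m × Fin n) ⊕ (Fin k × Fin r)) ℂ ×
      Matrix ((Fin m × Fin n) ⊕ (Fin k × Fin r)) ((Fin m × Fin n) ⊕ (Fin k × Fin r)) ℂ :=
  (Matrix.fromBlocks t.1.1 0 0 t.2.1,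
   Matrix.fromBlocks t.1.2.1 (-(oKron t.1.2.2 (eVec k (k - 1)) B))
     (oKron t.2.2.2 (eVec m (m - 1)) C) t.2.2.1)

/-!
The two diagonal blocks of a pencil in `𝕃₁(G)` are pencils in `L₁(A)` and `L₁(D)`, and the
off-diagonal blocks are determined by their ansatz vectors, so the block-assembly map is onto
`𝕃₁(G)` by definition. It is injective because a pencil in `L₁(P)` determines its ansatz vector
when the leading coefficient of `P` is nonzero: then `P(λ) ≠ 0` for some `λ`, and
`v ⊗ P(λ) = (λX + Y)(Λ(λ) ⊗ I)` can be read off from any nonzero entry of `P(λ)`.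
-/

section Kronecker

variable {a b : ℕ} {α β : Type*}

lemma vKron_add (v v' : Fin a → ℂ) (M : Matrix α β ℂ) :
    vKron (v + v') M = vKron v M + vKron v' M := by
  ext i j; simp only [vKron, Pi.add_apply, Matrix.add_apply]; ring

lemma vKron_smul (c : ℂ) (v : Fin a → ℂ) (M : Matrix α β ℂ) :
    vKron (c • v) M = c • vKron v M := by
  ext i j; simp only [vKron, Pi.smul_apply, Matrix.smul_apply, smul_eq_mul]; ring

lemma vKron_left_injective {M : Matrix α β ℂ} (hM : M ≠ 0) :
    Function.Injective (fun v : Fin a → ℂ => vKron v M) := by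
  obtain ⟨x, y, hxy⟩ : ∃ x y, M x y ≠ 0 := by
    by_contra! h
    exact hM (Matrix.ext h)
  intro v v' h
  funext i
  exact mul_right_cancel₀ hxy (congrFun (congrFun h (i, x)) y)

lemma oKron_add_left (v v' : Fin a → ℂ) (w : Fin b → ℂ) (M : Matrix α β ℂ) :
    oKron (v + v') w M = oKron v w M + oKron v' w M := by
  ext i j; simp only [oKron, Pi.add_apply, Matrix.add_apply]; ring

lemma oKron_smul_left (c : ℂ) (v : Fin a → ℂ) (w : Fin b → ℂ) (M : Matrix α β ℂ) :
    oKron (c • v) w M = c • oKron v w M := by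
  ext i j; simp only [oKron, Pi.smul_apply, Matrix.smul_apply, smul_eq_mul]; ring

end Kronecker

section L1

variable {d n : ℕ} (Pc : Fin (d + 1) → Matrix (Fin n) (Fin n) ℂ)

lemma polyEval_apply [DecidableEq ℂ] (lam : ℂ) (i j : Fin n) :
    polyEval Pc lam i j = (Polynomial.ofFn (d + 1) fun l => Pc l i j).eval lam := by
  simp [polyEval, Matrix.sum_apply, Polynomial.ofFn_eq_sum_monomial, Polynomial.eval_finsetSum,
    mul_comm]

lemma exists_polyEval_ne_zero (hP : Pc (Fin.last d) ≠ 0) : ∃ lam, polyEval Pc lam ≠ 0 := by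
  classical
  obtain ⟨i, j, hij⟩ : ∃ i j, Pc (Fin.last d) i j ≠ 0 := by
    by_contra! h
    exact hP (Matrix.ext h)
  have hq : Polynomial.ofFn (d + 1) (fun l => Pc l i j) ≠ 0 := by
    intro h
    have hcoeff := congrArg (Polynomial.coeff · d) h
    simp only [Polynomial.ofFn_coeff_eq_val_of_lt _ d.lt_succ_self, Polynomial.coeff_zero]
      at hcoeff
    exact hij hcoeff
  obtain ⟨lam, hlam⟩ : ∃ lam, (Polynomial.ofFn (d + 1) fun l => Pc l i j).eval lam ≠ 0 := by
    by_contra! h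
    exact hq (Polynomial.zero_of_eval_zero _ h)
  exact ⟨lam, fun h => hlam (by rw [← polyEval_apply, h, Matrix.zero_apply])⟩

lemma InL1.ansatz_eq {Pc} (hP : Pc (Fin.last d) ≠ 0)
    {X Y : Matrix (Fin d × Fin n) (Fin d × Fin n) ℂ} {v v' : Fin d → ℂ}
    (h : InL1 Pc X Y v) (h' : InL1 Pc X Y v') : v = v' := by
  obtain ⟨lam, hlam⟩ := exists_polyEval_ne_zero Pc hP
  exact vKron_left_injective hlam ((h lam).symm.trans (h' lam))

def l1Submodule : Submodule ℂ (Trip d n) where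
  carrier := {t | InL1 Pc t.1 t.2.1 t.2.2}
  zero_mem' lam := by
    ext
    simp [vKron]
  add_mem' {t t'} h h' lam := by
    have hpencil :
        lam • (t + t').1 + (t + t').2.1 = (lam • t.1 + t.2.1) + (lam • t'.1 + t'.2.1) := by
      simp only [Prod.fst_add, Prod.snd_add, smul_add]; abel
    rw [hpencil, Matrix.add_mul, h lam, h' lam, Prod.snd_add, Prod.snd_add, vKron_add]
  smul_mem' c t h lam := by
    have hpencil : lam • (c • t).1 + (c • t).2.1 = c • (lam • t.1 + t.2.1) := by
      simp only [Prod.smul_fst, Prod.smul_snd, smul_add, smul_comm lam c]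
    rw [hpencil, Matrix.smul_mul, h lam, Prod.smul_snd, Prod.smul_snd, vKron_smul]

end L1

section Block

variable {m k n r : ℕ} (B : Matrix (Fin n) (Fin r) ℂ) (C : Matrix (Fin r) (Fin n) ℂ)

def psiLinearMap :
    (Trip m n × Trip k r) →ₗ[ℂ]
      (Matrix ((Fin m × Fin n) ⊕ (Fin k × Fin r)) ((Fin m × Fin n) ⊕ (Fin k × Fin r)) ℂ ×
       Matrix ((Fin m × Fin n) ⊕ (Fin k × Fin r)) ((Fin m × Fin n) ⊕ (Fin k × Fin r)) ℂ) where
  toFun := PsiMap B C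
  map_add' t t' := by
    simp only [PsiMap, Prod.fst_add, Prod.snd_add, Matrix.fromBlocks_add, oKron_add_left,
      neg_add, add_zero, Prod.mk_add_mk]
  map_smul' c t := by
    simp only [PsiMap, Prod.smul_fst, Prod.smul_snd, Matrix.fromBlocks_smul, oKron_smul_left,
      smul_neg, smul_zero, RingHom.id_apply, Prod.smul_mk]

variable {B C}

lemma psiMap_injOn {Ac : Fin (m + 1) → Matrix (Fin n) (Fin n) ℂ}
    {Dc : Fin (k + 1) → Matrix (Fin r) (Fin r) ℂ}
    (hA : Ac (Fin.last m) ≠ 0) (hD : Dc (Fin.last k) ≠ 0) :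
    Set.InjOn (PsiMap B C)
      ({t | InL1 Ac t.1 t.2.1 t.2.2} ×ˢ {t | InL1 Dc t.1 t.2.1 t.2.2}) := by
  rintro ⟨⟨X, Y, v⟩, P, Q, w⟩ ⟨hv, hw⟩ ⟨⟨X', Y', v'⟩, P', Q', w'⟩ ⟨hv', hw'⟩ h
  simp only [PsiMap, Prod.mk.injEq, Matrix.fromBlocks_inj] at h
  obtain ⟨⟨rfl, -, -, rfl⟩, rfl, -, -, rfl⟩ := h
  obtain rfl : v = v' := InL1.ansatz_eq hA hv hv'
  obtain rfl : w = w' := InL1.ansatz_eq hD hw hw'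
  rfl

lemma psiMap_image (Ac : Fin (m + 1) → Matrix (Fin n) (Fin n) ℂ)
    (Dc : Fin (k + 1) → Matrix (Fin r) (Fin r) ℂ) :
    PsiMap B C '' ({t | InL1 Ac t.1 t.2.1 t.2.2} ×ˢ {t | InL1 Dc t.1 t.2.1 t.2.2})
      = {p | ∃ v w, InBL1 Ac Dc B C p.1 p.2 v w} := by
  ext p
  constructor
  · rintro ⟨⟨⟨X, Y, v⟩, P, Q, w⟩, ⟨hv, hw⟩, rfl⟩
    exact ⟨v, w, X, Y, P, Q, hv, hw, rfl, rfl⟩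
  · rintro ⟨v, w, X, Y, P, Q, hv, hw, hX, hY⟩
    exact ⟨((X, Y, v), (P, Q, w)), ⟨hv, hw⟩, Prod.ext hX.symm hY.symm⟩

end Block

theorem stmt1_general {m k n r : ℕ}
    (Ac : Fin (m + 1) → Matrix (Fin n) (Fin n) ℂ)
    (Dc : Fin (k + 1) → Matrix (Fin r) (Fin r) ℂ)
    (B : Matrix (Fin n) (Fin r) ℂ) (C : Matrix (Fin r) (Fin n) ℂ)
    (hA : Ac (Fin.last m) ≠ 0) (hD : Dc (Fin.last k) ≠ 0) :
    ∃ (SA : Submodule ℂ (Trip m n)) (SD : Submodule ℂ (Trip k r))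
      (SG : Submodule ℂ
        (Matrix ((Fin m × Fin n) ⊕ (Fin k × Fin r)) ((Fin m × Fin n) ⊕ (Fin k × Fin r)) ℂ ×
         Matrix ((Fin m × Fin n) ⊕ (Fin k × Fin r)) ((Fin m × Fin n) ⊕ (Fin k × Fin r)) ℂ)),
      (SA : Set (Trip m n)) = {t | InL1 Ac t.1 t.2.1 t.2.2} ∧
      (SD : Set (Trip k r)) = {t | InL1 Dc t.1 t.2.1 t.2.2} ∧
      (SG : Set (Matrix ((Fin m × Fin n) ⊕ (Fin k × Fin r)) ((Fin m × Fin n) ⊕ (Fin k × Fin r)) ℂ ×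
        Matrix ((Fin m × Fin n) ⊕ (Fin k × Fin r)) ((Fin m × Fin n) ⊕ (Fin k × Fin r)) ℂ))
          = {p | ∃ v w, InBL1 Ac Dc B C p.1 p.2 v w} ∧
      Set.InjOn (PsiMap B C)
        ({t | InL1 Ac t.1 t.2.1 t.2.2} ×ˢ {t | InL1 Dc t.1 t.2.1 t.2.2}) ∧
      PsiMap B C '' ({t | InL1 Ac t.1 t.2.1 t.2.2} ×ˢ {t | InL1 Dc t.1 t.2.1 t.2.2})
          = {p | ∃ v w, InBL1 Ac Dc B C p.1 p.2 v w} ∧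
      Nonempty ((SA.prod SD) ≃ₗ[ℂ] SG) := by
  have hinj := psiMap_injOn (B := B) (C := C) hA hD
  let f := (psiLinearMap B C).domRestrict ((l1Submodule Ac).prod (l1Submodule Dc))
  have hf : Function.Injective f := fun s t hst => Subtype.ext (hinj s.2 t.2 hst)
  refine ⟨l1Submodule Ac, l1Submodule Dc, LinearMap.range f, rfl, rfl, ?_, hinj,
    psiMap_image Ac Dc, ⟨LinearEquiv.ofInjective f hf⟩⟩
  rw [LinearMap.range_domRestrict, Submodule.map_coe]
  exact psiMap_image Ac Dc

/-- with `A_m ≠ 0`, `D_k ≠ 0`, the sets `𝒜 = L₁(A)` and `𝒟 = L₁(D)` (of triples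
`(X, Y, v)` resp. `(P, Q, w)`) are subspaces, the block-assembly map `Ψ` is injective on
`𝒜 × 𝒟`, its image is exactly the set of pencils in `𝕃₁(G)`, and consequently `𝕃₁(G)` is
linearly isomorphic to `L₁(A) × L₁(D)`. -/
theorem stmt1 {m k n r : ℕ} (hm : 1 ≤ m) (hk : 1 ≤ k) (hn : 1 ≤ n) (hr : 1 ≤ r)
    (Ac : Fin (m + 1) → Matrix (Fin n) (Fin n) ℂ)
    (Dc : Fin (k + 1) → Matrix (Fin r) (Fin r) ℂ)
    (B : Matrix (Fin n) (Fin r) ℂ) (C : Matrix (Fin r) (Fin n) ℂ)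
    (hA : Ac (Fin.last m) ≠ 0) (hD : Dc (Fin.last k) ≠ 0) :
    ∃ (SA : Submodule ℂ (Trip m n)) (SD : Submodule ℂ (Trip k r))
      (SG : Submodule ℂ
        (Matrix ((Fin m × Fin n) ⊕ (Fin k × Fin r)) ((Fin m × Fin n) ⊕ (Fin k × Fin r)) ℂ ×
         Matrix ((Fin m × Fin n) ⊕ (Fin k × Fin r)) ((Fin m × Fin n) ⊕ (Fin k × Fin r)) ℂ)),
      (SA : Set (Trip m n)) = {t | InL1 Ac t.1 t.2.1 t.2.2} ∧
      (SD : Set (Trip k r)) = {t | InL1 Dc t.1 t.2.1 t.2.2} ∧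
      (SG : Set (Matrix ((Fin m × Fin n) ⊕ (Fin k × Fin r)) ((Fin m × Fin n) ⊕ (Fin k × Fin r)) ℂ ×
        Matrix ((Fin m × Fin n) ⊕ (Fin k × Fin r)) ((Fin m × Fin n) ⊕ (Fin k × Fin r)) ℂ))
          = {p | ∃ v w, InBL1 Ac Dc B C p.1 p.2 v w} ∧
      Set.InjOn (PsiMap B C)
        ({t | InL1 Ac t.1 t.2.1 t.2.2} ×ˢ {t | InL1 Dc t.1 t.2.1 t.2.2}) ∧
      PsiMap B C '' ({t | InL1 Ac t.1 t.2.1 t.2.2} ×ˢ {t | InL1 Dc t.1 t.2.1 t.2.2})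
          = {p | ∃ v w, InBL1 Ac Dc B C p.1 p.2 v w} ∧
      Nonempty ((SA.prod SD) ≃ₗ[ℂ] SG) :=
  stmt1_general Ac Dc B C hA hD
end
end

section
/- Let v ∈ ℂ^m, w ∈ ℂ^k and let 𝕏, 𝕐 ∈ ℂ^{(mn+kr)×(mn+kr)}. Then the pencil λ𝕏+𝕐 is in 𝕃₁(G) with ansatz vectors (v, w) if and only if there exist W ∈ ℂ^{mn×(m−1)n} and W₁ ∈ ℂ^{kr×(k−1)r} such that, with row blocks of sizes (mn, kr) and column blocks of sizes (n, (m−1)n, r, (k−1)r): 𝕏 = [[v⊗A_m, W, 0, 0],[0, 0, w⊗D_k, W₁]], and, with the same row blocks and column blocks of sizes ((m−1)n, n, (k−1)r, r): 𝕐 = [[v⊗[A_{m−1} A_{m−2} ⋯ A₁] − W, v⊗A₀, 0, −v⊗B],[0, w⊗C, w⊗[D_{k−1} D_{k−2} ⋯ D₁] − W₁, w⊗D₀]], where [A_{m−1} ⋯ A₁] denotes the n×(m−1)n horizontal concatenation and [D_{k−1} ⋯ D₁] the r×(k−1)r horizontal concatenation. -/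
/-!
The block-diagonal shape of `𝕃₁(G)` reduces everything to the single-polynomial space `L₁(P)`.
There, with the column shifted sum `X ⊞→ Y = [X 0] + [0 Y]`,
`(λX + Y)(Λ_{d-1}(λ) ⊗ I) = (X ⊞→ Y)(Λ_d(λ) ⊗ I)` and `v ⊗ P(λ) = (v ⊗ [P_d ⋯ P_0])(Λ_d(λ) ⊗ I)`.
The entries of `Λ_d(λ)` are distinct monomials, so `λX + Y ∈ L₁(P)` with ansatz vector `v` iff
`X ⊞→ Y = v ⊗ [P_d ⋯ P_0]`, and the solutions of this linear equation are parametrized by the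
last `d - 1` block columns `W` of `X`.
-/

open Matrix Finset

noncomputable section

/-- the matrix `𝕏 = [[v⊗A_m, W, 0, 0],[0, 0, w⊗D_k, W₁]]` (row blocks `(mn, kr)`,
column blocks `(n, (m−1)n, r, (k−1)r)`). -/
def X2form {m k n r : ℕ} (Am : Matrix (Fin n) (Fin n) ℂ) (Dk : Matrix (Fin r) (Fin r) ℂ)
    (v : Fin m → ℂ) (w : Fin k → ℂ)
    (W : Matrix (Fin m × Fin n) (Fin (m - 1) × Fin n) ℂ)
    (W1 : Matrix (Fin k × Fin r) (Fin (k - 1) × Fin r) ℂ) :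
    Matrix ((Fin m × Fin n) ⊕ (Fin k × Fin r)) ((Fin m × Fin n) ⊕ (Fin k × Fin r)) ℂ :=
  fun i j =>
    match i, j with
    | Sum.inl (a, p), Sum.inl (b, q) =>
        if hb : (b : ℕ) = 0 then v a * Am p q
        else W (a, p) (⟨(b : ℕ) - 1, by have := b.isLt; omega⟩, q)
    | Sum.inl _, Sum.inr _ => 0
    | Sum.inr _, Sum.inl _ => 0
    | Sum.inr (c, s), Sum.inr (d, t) =>
        if hd : (d : ℕ) = 0 then w c * Dk s t
        else W1 (c, s) (⟨(d : ℕ) - 1, by have := d.isLt; omega⟩, t)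

/-- the matrix `𝕐 = [[v⊗[A_{m−1} ⋯ A₁] − W, v⊗A₀, 0, −v⊗B],
[0, w⊗C, w⊗[D_{k−1} ⋯ D₁] − W₁, w⊗D₀]]` (row blocks `(mn, kr)`, column blocks
`((m−1)n, n, (k−1)r, r)`). -/
def Y2form {m k n r : ℕ} (Ac : Fin (m + 1) → Matrix (Fin n) (Fin n) ℂ)
    (Dc : Fin (k + 1) → Matrix (Fin r) (Fin r) ℂ)
    (B : Matrix (Fin n) (Fin r) ℂ) (C : Matrix (Fin r) (Fin n) ℂ)
    (v : Fin m → ℂ) (w : Fin k → ℂ)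
    (W : Matrix (Fin m × Fin n) (Fin (m - 1) × Fin n) ℂ)
    (W1 : Matrix (Fin k × Fin r) (Fin (k - 1) × Fin r) ℂ) :
    Matrix ((Fin m × Fin n) ⊕ (Fin k × Fin r)) ((Fin m × Fin n) ⊕ (Fin k × Fin r)) ℂ :=
  fun i j =>
    match i, j with
    | Sum.inl (a, p), Sum.inl (b, q) =>
        if hb : (b : ℕ) = m - 1 then v a * Ac 0 p q
        else v a * Ac ⟨m - 1 - (b : ℕ), by omega⟩ p q
          - W (a, p) (⟨(b : ℕ), by have := b.isLt; omega⟩, q)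
    | Sum.inl (a, p), Sum.inr (d, t) =>
        if (d : ℕ) = k - 1 then -(v a * B p t) else 0
    | Sum.inr (c, s), Sum.inl (b, q) =>
        if (b : ℕ) = m - 1 then w c * C s q else 0
    | Sum.inr (c, s), Sum.inr (d, t) =>
        if hd : (d : ℕ) = k - 1 then w c * Dc 0 s t
        else w c * Dc ⟨k - 1 - (d : ℕ), by omega⟩ s t
          - W1 (c, s) (⟨(d : ℕ), by have := d.isLt; omega⟩, t)

theorem mul_vKron_Lam_apply {ι : Type*} {e n : ℕ} (M : Matrix ι (Fin e × Fin n) ℂ)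
    (lam : ℂ) (i : ι) (q : Fin n) :
    (M * vKron (Lam e lam) (1 : Matrix (Fin n) (Fin n) ℂ)) i q
      = ∑ t : Fin e, M i (t, q) * lam ^ (e - 1 - (t : ℕ)) := by
  simp [Matrix.mul_apply, Fintype.sum_prod_type, vKron, Lam, Matrix.one_apply]

theorem eq_zero_of_forall_sum_mul_pow_eq_zero {e : ℕ} (c : Fin e → ℂ)
    (h : ∀ lam : ℂ, ∑ t : Fin e, c t * lam ^ (e - 1 - (t : ℕ)) = 0) : c = 0 := by
  set p : Polynomial ℂ := ∑ t : Fin e, Polynomial.C (c t) * Polynomial.X ^ (e - 1 - (t : ℕ))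
  have hp : p = 0 := Polynomial.funext fun lam => by simpa [p, Polynomial.eval_finsetSum] using h lam
  funext t
  have hinj : ∀ s : Fin e, e - 1 - (t : ℕ) = e - 1 - (s : ℕ) ↔ s = t := fun s => by
    rw [← Fin.val_inj]; omega
  simpa [p, Polynomial.finsetSum_coeff, Polynomial.coeff_C_mul_X_pow, hinj] using
    congrArg (Polynomial.coeff · (e - 1 - (t : ℕ))) hp

theorem eq_of_forall_mul_vKron_Lam_eq {ι : Type*} {e n : ℕ} {M N : Matrix ι (Fin e × Fin n) ℂ}
    (h : ∀ lam : ℂ, M * vKron (Lam e lam) (1 : Matrix (Fin n) (Fin n) ℂ)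
      = N * vKron (Lam e lam) (1 : Matrix (Fin n) (Fin n) ℂ)) : M = N := by
  ext i ⟨t, q⟩
  have hc := eq_zero_of_forall_sum_mul_pow_eq_zero (fun t => M i (t, q) - N i (t, q)) fun lam => by
    have := congrFun (congrFun (h lam) i) q
    simp only [mul_vKron_Lam_apply] at this
    simp [sub_mul, Finset.sum_sub_distrib, this]
  exact sub_eq_zero.mp (congrFun hc t)

/-- The column shifted sum `X ⊞→ Y = [X 0] + [0 Y]` of Mackey–Mackey–Mehl–Mehrmann. -/
def colShiftSum {ι : Type*} {d n : ℕ} (X Y : Matrix ι (Fin d × Fin n) ℂ) :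
    Matrix ι (Fin (d + 1) × Fin n) ℂ :=
  fun i j => (if h : (j.1 : ℕ) < d then X i (⟨j.1, h⟩, j.2) else 0)
    + (if h : (j.1 : ℕ) = 0 then 0 else Y i (⟨j.1 - 1, by omega⟩, j.2))

theorem pencil_mul_vKron_Lam {ι : Type*} {d n : ℕ} (X Y : Matrix ι (Fin d × Fin n) ℂ) (lam : ℂ) :
    (lam • X + Y) * vKron (Lam d lam) (1 : Matrix (Fin n) (Fin n) ℂ)
      = colShiftSum X Y * vKron (Lam (d + 1) lam) (1 : Matrix (Fin n) (Fin n) ℂ) := by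
  ext i q
  have hX (t : Fin d) : lam * X i (t, q) * lam ^ (d - t - 1) = X i (t, q) * lam ^ (d - t) := by
    rw [mul_right_comm, ← pow_succ', Nat.sub_add_cancel (by omega), mul_comm]
  simp only [mul_vKron_Lam_apply, colShiftSum, add_mul, Finset.sum_add_distrib]
  rw [Fin.sum_univ_castSucc, Fin.sum_univ_succ (f := fun t : Fin (d + 1) => _ * _)]
  simp [add_mul, Finset.sum_add_distrib, hX, Nat.sub_add_eq, Nat.sub_right_comm d 1]

/-- The block row `[P_d P_{d-1} ⋯ P_0]` of coefficients. -/
def coeffRow {d n : ℕ} (Pc : Fin (d + 1) → Matrix (Fin n) (Fin n) ℂ) :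
    Matrix (Fin n) (Fin (d + 1) × Fin n) ℂ :=
  fun p j => Pc (Fin.rev j.1) p j.2

theorem vKron_polyEval {d n : ℕ} (Pc : Fin (d + 1) → Matrix (Fin n) (Fin n) ℂ) (v : Fin d → ℂ)
    (lam : ℂ) :
    vKron v (polyEval Pc lam)
      = vKron v (coeffRow Pc) * vKron (Lam (d + 1) lam) (1 : Matrix (Fin n) (Fin n) ℂ) := by
  ext ⟨a, p⟩ q
  rw [mul_vKron_Lam_apply, ← Equiv.sum_comp Fin.revPerm]
  simp only [vKron, coeffRow, polyEval, Matrix.sum_apply, Matrix.smul_apply, smul_eq_mul,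
    Finset.mul_sum, Fin.revPerm_apply, Fin.rev_rev, Fin.val_rev]
  refine Finset.sum_congr rfl fun t _ => ?_
  rw [show d + 1 - 1 - (d + 1 - (t + 1)) = (t : ℕ) by omega]
  ring

theorem inL1_iff_colShiftSum_eq {d n : ℕ} (Pc : Fin (d + 1) → Matrix (Fin n) (Fin n) ℂ)
    (X Y : Matrix (Fin d × Fin n) (Fin d × Fin n) ℂ) (v : Fin d → ℂ) :
    InL1 Pc X Y v ↔ colShiftSum X Y = vKron v (coeffRow Pc) := by
  simp only [InL1, pencil_mul_vKron_Lam, vKron_polyEval]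
  exact ⟨eq_of_forall_mul_vKron_Lam_eq, fun h lam => by rw [h]⟩

/-- `X = [v ⊗ P_d, W]`, with column blocks of sizes `n` and `(d-1)n`. -/
def l1X {d n : ℕ} (Pd : Matrix (Fin n) (Fin n) ℂ) (v : Fin d → ℂ)
    (W : Matrix (Fin d × Fin n) (Fin (d - 1) × Fin n) ℂ) :
    Matrix (Fin d × Fin n) (Fin d × Fin n) ℂ :=
  fun i j => if h : (j.1 : ℕ) = 0 then v i.1 * Pd i.2 j.2 else W i (⟨j.1 - 1, by omega⟩, j.2)

/-- `Y = [v ⊗ [P_{d-1} ⋯ P_1] - W, v ⊗ P_0]`, with column blocks of sizes `(d-1)n` and `n`. -/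
def l1Y {d n : ℕ} (Pc : Fin (d + 1) → Matrix (Fin n) (Fin n) ℂ) (v : Fin d → ℂ)
    (W : Matrix (Fin d × Fin n) (Fin (d - 1) × Fin n) ℂ) :
    Matrix (Fin d × Fin n) (Fin d × Fin n) ℂ :=
  fun i j => if h : (j.1 : ℕ) = d - 1 then v i.1 * Pc 0 i.2 j.2
    else v i.1 * Pc ⟨d - 1 - j.1, by omega⟩ i.2 j.2 - W i (⟨j.1, by omega⟩, j.2)

theorem colShiftSum_eq_vKron_coeffRow_iff {d n : ℕ} (Pc : Fin (d + 1) → Matrix (Fin n) (Fin n) ℂ)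
    (X Y : Matrix (Fin d × Fin n) (Fin d × Fin n) ℂ) (v : Fin d → ℂ) :
    colShiftSum X Y = vKron v (coeffRow Pc) ↔
      ∃ W, X = l1X (Pc (Fin.last d)) v W ∧ Y = l1Y Pc v W := by
  constructor
  · intro h
    have hent : ∀ i t q, colShiftSum X Y i (t, q) = v i.1 * Pc (Fin.rev t) i.2 q :=
      fun i t q => congrFun (congrFun h i) (t, q)
    refine ⟨fun i j => X i (⟨j.1 + 1, by omega⟩, j.2), ?_, ?_⟩
    · ext i ⟨b, q⟩
      have hcol := hent i (Fin.castSucc b) q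
      simp only [colShiftSum, l1X] at hcol ⊢
      split_ifs at hcol ⊢ <;> grind
    · ext i ⟨b, q⟩
      have hcol := hent i (Fin.succ b) q
      simp only [colShiftSum, l1Y] at hcol ⊢
      split_ifs at hcol ⊢ <;> grind
  · rintro ⟨W, rfl, rfl⟩
    ext i ⟨t, q⟩
    have hd : 0 < d := i.1.pos
    simp only [colShiftSum, l1X, l1Y, vKron, coeffRow]
    split_ifs <;> grind

theorem inL1_iff {d n : ℕ} (Pc : Fin (d + 1) → Matrix (Fin n) (Fin n) ℂ)
    (X Y : Matrix (Fin d × Fin n) (Fin d × Fin n) ℂ) (v : Fin d → ℂ) :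
    InL1 Pc X Y v ↔ ∃ W, X = l1X (Pc (Fin.last d)) v W ∧ Y = l1Y Pc v W := by
  rw [inL1_iff_colShiftSum_eq, colShiftSum_eq_vKron_coeffRow_iff]

theorem X2form_eq_fromBlocks {m k n r : ℕ} (Am : Matrix (Fin n) (Fin n) ℂ)
    (Dk : Matrix (Fin r) (Fin r) ℂ) (v : Fin m → ℂ) (w : Fin k → ℂ)
    (W : Matrix (Fin m × Fin n) (Fin (m - 1) × Fin n) ℂ)
    (W1 : Matrix (Fin k × Fin r) (Fin (k - 1) × Fin r) ℂ) :
    X2form Am Dk v w W W1 = fromBlocks (l1X Am v W) 0 0 (l1X Dk w W1) := by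
  ext (⟨a, p⟩ | ⟨c, s⟩) (⟨b, q⟩ | ⟨e, t⟩) <;> rfl

theorem Y2form_eq_fromBlocks {m k n r : ℕ} (Ac : Fin (m + 1) → Matrix (Fin n) (Fin n) ℂ)
    (Dc : Fin (k + 1) → Matrix (Fin r) (Fin r) ℂ)
    (B : Matrix (Fin n) (Fin r) ℂ) (C : Matrix (Fin r) (Fin n) ℂ)
    (v : Fin m → ℂ) (w : Fin k → ℂ)
    (W : Matrix (Fin m × Fin n) (Fin (m - 1) × Fin n) ℂ)
    (W1 : Matrix (Fin k × Fin r) (Fin (k - 1) × Fin r) ℂ) :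
    Y2form Ac Dc B C v w W W1 = fromBlocks (l1Y Ac v W) (-(oKron v (eVec k (k - 1)) B))
      (oKron w (eVec m (m - 1)) C) (l1Y Dc w W1) := by
  ext (⟨a, p⟩ | ⟨c, s⟩) (⟨b, q⟩ | ⟨e, t⟩)
  · rfl
  · simp only [Y2form, oKron, eVec, Matrix.neg_apply, fromBlocks_apply₁₂]
    split_ifs <;> simp
  · simp [Y2form, oKron, eVec]
  · rfl

theorem stmt2_general {m k n r : ℕ}
    (Ac : Fin (m + 1) → Matrix (Fin n) (Fin n) ℂ)
    (Dc : Fin (k + 1) → Matrix (Fin r) (Fin r) ℂ)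
    (B : Matrix (Fin n) (Fin r) ℂ) (C : Matrix (Fin r) (Fin n) ℂ)
    (v : Fin m → ℂ) (w : Fin k → ℂ)
    (XX YY : Matrix ((Fin m × Fin n) ⊕ (Fin k × Fin r)) ((Fin m × Fin n) ⊕ (Fin k × Fin r)) ℂ) :
    InBL1 Ac Dc B C XX YY v w ↔
      ∃ (W : Matrix (Fin m × Fin n) (Fin (m - 1) × Fin n) ℂ)
        (W1 : Matrix (Fin k × Fin r) (Fin (k - 1) × Fin r) ℂ),
        XX = X2form (Ac (Fin.last m)) (Dc (Fin.last k)) v w W W1 ∧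
        YY = Y2form Ac Dc B C v w W W1 := by
  simp only [InBL1, inL1_iff, X2form_eq_fromBlocks, Y2form_eq_fromBlocks]
  constructor
  · rintro ⟨X, Y, P, Q, ⟨W, rfl, rfl⟩, ⟨W1, rfl, rfl⟩, rfl, rfl⟩
    exact ⟨W, W1, rfl, rfl⟩
  · rintro ⟨W, W1, rfl, rfl⟩
    exact ⟨_, _, _, _, ⟨W, rfl, rfl⟩, ⟨W1, rfl, rfl⟩, rfl, rfl⟩

/-- characterization of the pencils in `𝕃₁(G)` with ansatz vectors `(v, w)`:
they are exactly the pencils `λ𝕏 + 𝕐` with `𝕏 = X2form` and `𝕐 = Y2form` for arbitrary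
`W ∈ ℂ^{mn×(m−1)n}` and `W₁ ∈ ℂ^{kr×(k−1)r}`. -/
theorem stmt2 {m k n r : ℕ} (hm : 1 ≤ m) (hk : 1 ≤ k) (hn : 1 ≤ n) (hr : 1 ≤ r)
    (Ac : Fin (m + 1) → Matrix (Fin n) (Fin n) ℂ)
    (Dc : Fin (k + 1) → Matrix (Fin r) (Fin r) ℂ)
    (B : Matrix (Fin n) (Fin r) ℂ) (C : Matrix (Fin r) (Fin n) ℂ)
    (v : Fin m → ℂ) (w : Fin k → ℂ)
    (XX YY : Matrix ((Fin m × Fin n) ⊕ (Fin k × Fin r)) ((Fin m × Fin n) ⊕ (Fin k × Fin r)) ℂ) :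
    InBL1 Ac Dc B C XX YY v w ↔
      ∃ (W : Matrix (Fin m × Fin n) (Fin (m - 1) × Fin n) ℂ)
        (W1 : Matrix (Fin k × Fin r) (Fin (k - 1) × Fin r) ℂ),
        XX = X2form (Ac (Fin.last m)) (Dc (Fin.last k)) v w W W1 ∧
        YY = Y2form Ac Dc B C v w W W1 :=
  stmt2_general Ac Dc B C v w XX YY
end
end

section
/- Let λ₀ ∈ ℂ with det A(λ₀) ≠ 0 and let * denote the conjugate transpose. Then the linear map g : ℂ^r → ℂ^{n+r} defined by g(y) = ((−C A(λ₀)^{-1})^* y, y) restricts to a linear bijection from {y ∈ ℂ^r : G(λ₀)^* y = 0} onto {u ∈ ℂ^{n+r} : S(λ₀)^* u = 0}. -/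
open Matrix Finset

noncomputable section

/-- the Rosenbrock system matrix `S(λ) = [[A(λ), −B],[C, D(λ)]]`. -/
def Smat {m k n r : ℕ} (Ac : Fin (m + 1) → Matrix (Fin n) (Fin n) ℂ)
    (Dc : Fin (k + 1) → Matrix (Fin r) (Fin r) ℂ)
    (B : Matrix (Fin n) (Fin r) ℂ) (C : Matrix (Fin r) (Fin n) ℂ) (lam : ℂ) :
    Matrix (Fin n ⊕ Fin r) (Fin n ⊕ Fin r) ℂ :=
  Matrix.fromBlocks (polyEval Ac lam) (-B) C (polyEval Dc lam)

/-! The kernel of `S(λ₀)ᴴ = [[Aᴴ, Cᴴ], [-Bᴴ, Dᴴ]]` is described by eliminating the first block of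
unknowns through the invertible pivot `Aᴴ`; what remains is the kernel of the Schur complement
`Dᴴ + Bᴴ (Aᴴ)⁻¹ Cᴴ = G(λ₀)ᴴ`. -/

namespace Matrix

variable {R : Type*} [CommRing R] {l o : Type*} [Fintype l] [DecidableEq l] [Fintype o]

theorem fromBlocks_mulVec_sumElim_neg_inv_mul (P : Matrix l l R) (Q : Matrix l o R)
    (S : Matrix o l R) (T : Matrix o o R) (hP : IsUnit P.det) (x : o → R) :
    fromBlocks P Q S T *ᵥ Sum.elim (-(P⁻¹ * Q) *ᵥ x) x
      = Sum.elim (0 : l → R) ((T - S * P⁻¹ * Q) *ᵥ x) := by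
  rw [fromBlocks_mulVec, Sum.elim_comp_inl, Sum.elim_comp_inr, mulVec_mulVec, mulVec_mulVec,
    Matrix.mul_neg, ← Matrix.mul_assoc, mul_nonsing_inv _ hP, Matrix.one_mul, neg_mulVec,
    neg_add_cancel, sub_mulVec, Matrix.mul_neg, neg_mulVec, Matrix.mul_assoc, add_comm,
    ← sub_eq_add_neg]

theorem eq_neg_inv_mul_mulVec_of_fromBlocks_mulVec_eq_zero {P : Matrix l l R}
    {Q : Matrix l o R} {S : Matrix o l R} {T : Matrix o o R} (hP : IsUnit P.det)
    {a : l → R} {x : o → R} (h : fromBlocks P Q S T *ᵥ Sum.elim a x = 0) :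
    a = -(P⁻¹ * Q) *ᵥ x := by
  have hfirst : P *ᵥ a + Q *ᵥ x = 0 := by
    rw [fromBlocks_mulVec] at h
    exact congrArg (· ∘ Sum.inl) h
  calc a = P⁻¹ *ᵥ (P *ᵥ a) := by rw [mulVec_mulVec, nonsing_inv_mul _ hP, one_mulVec]
    _ = P⁻¹ *ᵥ -(Q *ᵥ x) := by rw [eq_neg_of_add_eq_zero_left hfirst]
    _ = -(P⁻¹ * Q) *ᵥ x := by rw [mulVec_neg, mulVec_mulVec, neg_mulVec]

theorem bijOn_ker_schurComplement_ker_fromBlocks (P : Matrix l l R) (Q : Matrix l o R)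
    (S : Matrix o l R) (T : Matrix o o R) (hP : IsUnit P.det) :
    Set.BijOn (fun x : o → R => Sum.elim (-(P⁻¹ * Q) *ᵥ x) x)
      {x | (T - S * P⁻¹ * Q) *ᵥ x = 0} {u | fromBlocks P Q S T *ᵥ u = 0} := by
  refine ⟨fun x (hx : _ = 0) => ?_,
    fun x _ y _ hxy => funext fun i => congrFun hxy (Sum.inr i), fun u hu => ?_⟩
  · show _ = 0
    rw [fromBlocks_mulVec_sumElim_neg_inv_mul P Q S T hP, hx]
    exact Sum.elim_zero_zero
  · obtain ⟨a, x, rfl⟩ : ∃ a x, u = Sum.elim a x :=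
      ⟨u ∘ Sum.inl, u ∘ Sum.inr, (Sum.elim_comp_inl_inr u).symm⟩
    obtain rfl := eq_neg_inv_mul_mulVec_of_fromBlocks_mulVec_eq_zero hP hu
    refine ⟨x, ?_, rfl⟩
    have hu' : fromBlocks P Q S T *ᵥ Sum.elim (-(P⁻¹ * Q) *ᵥ x) x = 0 := hu
    rw [fromBlocks_mulVec_sumElim_neg_inv_mul P Q S T hP] at hu'
    exact funext fun i => congrFun hu' (Sum.inr i)

end Matrix

theorem stmt5_general {m k n r : ℕ}
    (Ac : Fin (m + 1) → Matrix (Fin n) (Fin n) ℂ)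
    (Dc : Fin (k + 1) → Matrix (Fin r) (Fin r) ℂ)
    (B : Matrix (Fin n) (Fin r) ℂ) (C : Matrix (Fin r) (Fin n) ℂ)
    (lam0 : ℂ) (hdet : (polyEval Ac lam0).det ≠ 0) :
    Set.BijOn (fun y : Fin r → ℂ => Sum.elim (((-(C * (polyEval Ac lam0)⁻¹))ᴴ) *ᵥ y) y)
      {y : Fin r → ℂ | (Gmat Ac Dc B C lam0)ᴴ *ᵥ y = 0}
      {u : Fin n ⊕ Fin r → ℂ | (Smat Ac Dc B C lam0)ᴴ *ᵥ u = 0} := by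
  set A := polyEval Ac lam0
  have hA : IsUnit Aᴴ.det := by
    rw [det_conjTranspose]
    exact (star_ne_zero.mpr hdet).isUnit
  have hpivot : (-(C * A⁻¹))ᴴ = -(Aᴴ⁻¹ * Cᴴ) := by
    rw [conjTranspose_neg, conjTranspose_mul, conjTranspose_nonsing_inv]
  have hschur : (Gmat Ac Dc B C lam0)ᴴ = (polyEval Dc lam0)ᴴ - (-B)ᴴ * Aᴴ⁻¹ * Cᴴ := by
    rw [Gmat, conjTranspose_add, conjTranspose_mul, conjTranspose_mul, conjTranspose_nonsing_inv,
      conjTranspose_neg, Matrix.neg_mul, Matrix.neg_mul, sub_neg_eq_add, Matrix.mul_assoc]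
  rw [hpivot, hschur, Smat, fromBlocks_conjTranspose]
  exact bijOn_ker_schurComplement_ker_fromBlocks _ _ _ _ hA

/-- for `λ₀` with `det A(λ₀) ≠ 0`, the linear map
`g y = ((−C A(λ₀)⁻¹)^* y, y)` restricts to a bijection from the left null space of `G(λ₀)`
(i.e. the null space of `G(λ₀)^*`) onto the left null space of `S(λ₀)`. -/
theorem stmt5 {m k n r : ℕ} (hm : 1 ≤ m) (hk : 1 ≤ k) (hn : 1 ≤ n) (hr : 1 ≤ r)
    (Ac : Fin (m + 1) → Matrix (Fin n) (Fin n) ℂ)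
    (Dc : Fin (k + 1) → Matrix (Fin r) (Fin r) ℂ)
    (B : Matrix (Fin n) (Fin r) ℂ) (C : Matrix (Fin r) (Fin n) ℂ)
    (lam0 : ℂ) (hdet : (polyEval Ac lam0).det ≠ 0) :
    Set.BijOn (fun y : Fin r → ℂ => Sum.elim (((-(C * (polyEval Ac lam0)⁻¹))ᴴ) *ᵥ y) y)
      {y : Fin r → ℂ | (Gmat Ac Dc B C lam0)ᴴ *ᵥ y = 0}
      {u : Fin n ⊕ Fin r → ℂ | (Smat Ac Dc B C lam0)ᴴ *ᵥ u = 0} :=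
  stmt5_general Ac Dc B C lam0 hdet
end
end

section
/- Let λ ∈ ℂ with det A(λ) ≠ 0 and let 𝕃 be a pencil in 𝕃₁(G) with ansatz vectors (v, w), where w ≠ 0. For x ∈ ℂ^r define z(x) = [Λ_{m-1}(λ) ⊗ (A(λ)^{-1} B x); Λ_{k-1}(λ) ⊗ x] ∈ ℂ^{mn+kr}. Then: (i) G(λ) x = 0 if and only if 𝕃(λ) z(x) = 0; (ii) the map x ↦ z(x) is an injective linear map from {x : G(λ)x = 0} into {u ∈ ℂ^{mn+kr} : 𝕃(λ)u = 0}; (iii) z(x) ≠ 0 whenever x ≠ 0. -/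
open Matrix Finset

noncomputable section

/-- the vector `z(x) = [Λ_{m-1}(λ) ⊗ (A(λ)⁻¹ B x); Λ_{k-1}(λ) ⊗ x] ∈ ℂ^{mn+kr}`. -/
def zvec (m k : ℕ) {n r : ℕ} (Ac : Fin (m + 1) → Matrix (Fin n) (Fin n) ℂ)
    (B : Matrix (Fin n) (Fin r) ℂ) (lam : ℂ) (x : Fin r → ℂ) :
    ((Fin m × Fin n) ⊕ (Fin k × Fin r)) → ℂ :=
  Sum.elim (fun ap => Lam m lam ap.1 * (((polyEval Ac lam)⁻¹ * B) *ᵥ x) ap.2)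
    (fun cs => Lam k lam cs.1 * x cs.2)

/-! Since `L ∈ L₁(A)`, the block `L(λ)` maps `Λ_{m-1}(λ) ⊗ u` to `v ⊗ A(λ)u`, and the coupling
blocks `v e_kᵀ ⊗ B`, `w e_mᵀ ⊗ C` only see the last entry `1` of `Λ`. Hence
`𝕃(λ) z(x) = [v ⊗ (A(λ)A(λ)⁻¹Bx - Bx); w ⊗ (CA(λ)⁻¹Bx + D(λ)x)] = [0; w ⊗ G(λ)x]`,
which vanishes exactly when `G(λ)x = 0` because `w ≠ 0`. The last block row of `z(x)` is `x`
itself, which gives injectivity. -/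

def kronVec {R α β : Type*} [Mul R] (a : α → R) (u : β → R) : α × β → R :=
  fun p => a p.1 * u p.2

section Kronecker

variable {R α β : Type*}

theorem kronVec_add [Distrib R] (a : α → R) (u u' : β → R) :
    kronVec a (u + u') = kronVec a u + kronVec a u' :=
  funext fun _ => mul_add _ _ _

theorem kronVec_smul [CommSemigroup R] (a : α → R) (c : R) (u : β → R) :
    kronVec a (c • u) = c • kronVec a u :=
  funext fun _ => mul_left_comm _ _ _

theorem kronVec_eq_zero_iff [MulZeroClass R] [NoZeroDivisors R] {a : α → R} (ha : a ≠ 0)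
    (u : β → R) : kronVec a u = 0 ↔ u = 0 := by
  obtain ⟨i, hi⟩ := Function.ne_iff.mp ha
  refine ⟨fun h => funext fun q => ?_, fun h => by subst h; funext p; simp [kronVec]⟩
  exact (mul_eq_zero.mp (congrFun h (i, q))).resolve_left hi

end Kronecker

theorem vKron_one_mulVec {a n : ℕ} (c : Fin a → ℂ) (u : Fin n → ℂ) :
    vKron c (1 : Matrix (Fin n) (Fin n) ℂ) *ᵥ u = kronVec c u := by
  funext p
  simp [vKron, kronVec, mulVec, dotProduct, Matrix.one_apply, mul_ite]

theorem vKron_mulVec {a : ℕ} {α β : Type*} [Fintype β] (c : Fin a → ℂ) (M : Matrix α β ℂ)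
    (u : β → ℂ) : vKron c M *ᵥ u = kronVec c (M *ᵥ u) := by
  funext p
  simp [vKron, kronVec, mulVec, dotProduct, Finset.mul_sum, mul_assoc]

theorem oKron_mulVec_kronVec {a b : ℕ} {α β : Type*} [Fintype β] (v : Fin a → ℂ)
    (w c : Fin b → ℂ) (M : Matrix α β ℂ) (x : β → ℂ) :
    oKron v w M *ᵥ kronVec c x = (w ⬝ᵥ c) • kronVec v (M *ᵥ x) := by
  funext p
  simp only [oKron, kronVec, mulVec, dotProduct, Fintype.sum_prod_type, Pi.smul_apply,
    smul_eq_mul, Finset.sum_mul, Finset.mul_sum]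
  rw [Finset.sum_comm]
  refine Finset.sum_congr rfl fun q _ => Finset.sum_congr rfl fun j _ => ?_
  ring

theorem Lam_last {p : ℕ} (hp : 1 ≤ p) (lam : ℂ) : Lam p lam ⟨p - 1, by omega⟩ = 1 := by
  simp [Lam]

theorem eVec_last_dotProduct_Lam {p : ℕ} (hp : 1 ≤ p) (lam : ℂ) :
    eVec p (p - 1) ⬝ᵥ Lam p lam = 1 := by
  rw [dotProduct, Finset.sum_eq_single_of_mem (⟨p - 1, by omega⟩ : Fin p) (mem_univ _)]
  · simp [eVec, Lam_last hp]
  · intro j _ hj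
    simp [eVec, Fin.ext_iff.not.mp hj]

theorem InL1.mulVec_kronVec_Lam {d n : ℕ} {Pc : Fin (d + 1) → Matrix (Fin n) (Fin n) ℂ}
    {X Y : Matrix (Fin d × Fin n) (Fin d × Fin n) ℂ} {v : Fin d → ℂ}
    (h : InL1 Pc X Y v) (lam : ℂ) (u : Fin n → ℂ) :
    (lam • X + Y) *ᵥ kronVec (Lam d lam) u = kronVec v (polyEval Pc lam *ᵥ u) := by
  rw [← vKron_one_mulVec, mulVec_mulVec, h lam, vKron_mulVec]

section TransferFunction

variable {m k n r : ℕ} (Ac : Fin (m + 1) → Matrix (Fin n) (Fin n) ℂ)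
  (Dc : Fin (k + 1) → Matrix (Fin r) (Fin r) ℂ)
  (B : Matrix (Fin n) (Fin r) ℂ) (C : Matrix (Fin r) (Fin n) ℂ) (lam : ℂ)

theorem zvec_eq : zvec m k Ac B lam = fun x =>
    Sum.elim (kronVec (Lam m lam) (((polyEval Ac lam)⁻¹ * B) *ᵥ x)) (kronVec (Lam k lam) x) :=
  rfl

theorem zvec_smul_add (a : ℂ) (x y : Fin r → ℂ) :
    zvec m k Ac B lam (a • x + y) = a • zvec m k Ac B lam x + zvec m k Ac B lam y := by
  simp only [zvec_eq, mulVec_add, mulVec_smul, kronVec_add, kronVec_smul]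
  funext s
  cases s <;> rfl

theorem zvec_inr_last (hk : 1 ≤ k) (x : Fin r → ℂ) (q : Fin r) :
    zvec m k Ac B lam x (Sum.inr (⟨k - 1, by omega⟩, q)) = x q := by
  simp [zvec_eq, kronVec, Lam_last hk]

theorem InBL1.mulVec_zvec (hm : 1 ≤ m) (hk : 1 ≤ k) (hdet : (polyEval Ac lam).det ≠ 0)
    {XX YY : Matrix ((Fin m × Fin n) ⊕ (Fin k × Fin r)) ((Fin m × Fin n) ⊕ (Fin k × Fin r)) ℂ}
    {v : Fin m → ℂ} {w : Fin k → ℂ} (hL : InBL1 Ac Dc B C XX YY v w) (x : Fin r → ℂ) :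
    (lam • XX + YY) *ᵥ zvec m k Ac B lam x
      = Sum.elim (0 : Fin m × Fin n → ℂ) (kronVec w (Gmat Ac Dc B C lam *ᵥ x)) := by
  obtain ⟨X, Y, P, Q, hXY, hPQ, rfl, rfl⟩ := hL
  set u := ((polyEval Ac lam)⁻¹ * B) *ᵥ x
  have hAu : polyEval Ac lam *ᵥ u = B *ᵥ x := by
    rw [mulVec_mulVec, mul_nonsing_inv_cancel_left _ _ (isUnit_iff_ne_zero.2 hdet)]
  have hGx : Gmat Ac Dc B C lam *ᵥ x = C *ᵥ u + polyEval Dc lam *ᵥ x := by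
    rw [Gmat, add_mulVec, Matrix.mul_assoc, ← mulVec_mulVec, add_comm]
  simp only [fromBlocks_smul, fromBlocks_add, smul_zero, zero_add]
  rw [zvec_eq, fromBlocks_mulVec, Sum.elim_comp_inl, Sum.elim_comp_inr, hXY.mulVec_kronVec_Lam,
    hPQ.mulVec_kronVec_Lam, neg_mulVec, oKron_mulVec_kronVec, oKron_mulVec_kronVec,
    eVec_last_dotProduct_Lam hk, eVec_last_dotProduct_Lam hm, one_smul, one_smul, hAu, hGx,
    kronVec_add, add_neg_cancel]

end TransferFunction

theorem stmt8_general {m k n r : ℕ} (hm : 1 ≤ m) (hk : 1 ≤ k)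
    (Ac : Fin (m + 1) → Matrix (Fin n) (Fin n) ℂ)
    (Dc : Fin (k + 1) → Matrix (Fin r) (Fin r) ℂ)
    (B : Matrix (Fin n) (Fin r) ℂ) (C : Matrix (Fin r) (Fin n) ℂ)
    (lam : ℂ) (hdet : (polyEval Ac lam).det ≠ 0)
    (XX YY : Matrix ((Fin m × Fin n) ⊕ (Fin k × Fin r)) ((Fin m × Fin n) ⊕ (Fin k × Fin r)) ℂ)
    (v : Fin m → ℂ) (w : Fin k → ℂ) (hw : w ≠ 0)
    (hL : InBL1 Ac Dc B C XX YY v w) :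
    (∀ x : Fin r → ℂ,
        Gmat Ac Dc B C lam *ᵥ x = 0 ↔ (lam • XX + YY) *ᵥ zvec m k Ac B lam x = 0) ∧
    (∀ x y : Fin r → ℂ, zvec m k Ac B lam x = zvec m k Ac B lam y → x = y) ∧
    (∀ (a : ℂ) (x y : Fin r → ℂ),
        zvec m k Ac B lam (a • x + y) = a • zvec m k Ac B lam x + zvec m k Ac B lam y) ∧
    (∀ x : Fin r → ℂ, x ≠ 0 → zvec m k Ac B lam x ≠ 0) := by
  have hz := hL.mulVec_zvec Ac Dc B C lam hm hk hdet
  refine ⟨fun x => ?_, fun x y hxy => ?_, zvec_smul_add Ac B lam, fun x hx h0 => hx ?_⟩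
  · rw [hz, ← Sum.elim_zero_zero, Sum.elim_eq_iff, kronVec_eq_zero_iff hw]
    simp
  · funext q
    rw [← zvec_inr_last Ac B lam hk x q, hxy, zvec_inr_last Ac B lam hk y q]
  · funext q
    rw [← zvec_inr_last Ac B lam hk x q, h0, Pi.zero_apply, Pi.zero_apply]

/-- eigenvector recovery for pencils in `𝕃₁(G)`: for `λ` with `det A(λ) ≠ 0` and
`𝕃 ∈ 𝕃₁(G)` with ansatz vectors `(v, w)`, `w ≠ 0`:
(i) `G(λ)x = 0 ↔ 𝕃(λ) z(x) = 0`; (ii) `x ↦ z(x)` is injective and (iii) linear;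
(iv) `z(x) ≠ 0` whenever `x ≠ 0`. -/
theorem stmt8 {m k n r : ℕ} (hm : 1 ≤ m) (hk : 1 ≤ k) (hn : 1 ≤ n) (hr : 1 ≤ r)
    (Ac : Fin (m + 1) → Matrix (Fin n) (Fin n) ℂ)
    (Dc : Fin (k + 1) → Matrix (Fin r) (Fin r) ℂ)
    (B : Matrix (Fin n) (Fin r) ℂ) (C : Matrix (Fin r) (Fin n) ℂ)
    (lam : ℂ) (hdet : (polyEval Ac lam).det ≠ 0)
    (XX YY : Matrix ((Fin m × Fin n) ⊕ (Fin k × Fin r)) ((Fin m × Fin n) ⊕ (Fin k × Fin r)) ℂ)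
    (v : Fin m → ℂ) (w : Fin k → ℂ) (hw : w ≠ 0)
    (hL : InBL1 Ac Dc B C XX YY v w) :
    (∀ x : Fin r → ℂ,
        Gmat Ac Dc B C lam *ᵥ x = 0 ↔ (lam • XX + YY) *ᵥ zvec m k Ac B lam x = 0) ∧
    (∀ x y : Fin r → ℂ, zvec m k Ac B lam x = zvec m k Ac B lam y → x = y) ∧
    (∀ (a : ℂ) (x y : Fin r → ℂ),
        zvec m k Ac B lam (a • x + y) = a • zvec m k Ac B lam x + zvec m k Ac B lam y) ∧
    (∀ x : Fin r → ℂ, x ≠ 0 → zvec m k Ac B lam x ≠ 0) :=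
  stmt8_general hm hk Ac Dc B C lam hdet XX YY v w hw hL
end
end

section
/- Suppose the pencil 𝕃(λ) is in 𝕃₂(G) with ansatz vectors (s, z). Then for every λ ∈ ℂ with det A(λ) ≠ 0, [Λ_{m-1}(λ)ᵀ ⊗ (−C A(λ)^{-1}), Λ_{k-1}(λ)ᵀ ⊗ I_r] · 𝕃(λ) = [0, zᵀ ⊗ G(λ)], where the left factor is the r×(mn+kr) matrix obtained by horizontally concatenating the r×mn block Λ_{m-1}(λ)ᵀ ⊗ (−C A(λ)^{-1}) and the r×kr block Λ_{k-1}(λ)ᵀ ⊗ I_r, and the right-hand side concatenates the zero r×mn matrix with zᵀ ⊗ G(λ). -/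
open Matrix Finset

noncomputable section

/-!
Since `vᵀ ⊗ M = M (vᵀ ⊗ I)`, the `L₂` ansatz gives `(Λ_{p-1}(λ)ᵀ ⊗ M) L(λ) = sᵀ ⊗ M A(λ)`, and
since `Λ_{p-1}(λ)ᵀ e_p = 1`, a row block `Λ_{p-1}(λ)ᵀ ⊗ M` times a coupling block `e_p uᵀ ⊗ N` is
`uᵀ ⊗ M N`. With `M = -C A(λ)⁻¹` the first block column is `sᵀ ⊗ (-C) + sᵀ ⊗ C = 0`, and the
second is `zᵀ ⊗ C A(λ)⁻¹ B + zᵀ ⊗ D(λ) = zᵀ ⊗ G(λ)`.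
-/

section Kronecker

variable {a b : ℕ} {α β γ : Type*}

lemma mul_rKron [Fintype β] (v : Fin a → ℂ) (M : Matrix α β ℂ) (N : Matrix β γ ℂ) :
    M * rKron v N = rKron v (M * N) := by
  ext i ⟨j₁, j₂⟩
  simp only [rKron, Matrix.mul_apply, Finset.mul_sum]
  exact Finset.sum_congr rfl fun _ _ => by ring

lemma rKron_eq_mul_rKron_one [Fintype β] [DecidableEq β] (v : Fin a → ℂ) (M : Matrix α β ℂ) :
    rKron v M = M * rKron v (1 : Matrix β β ℂ) := by
  rw [mul_rKron, Matrix.mul_one]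

lemma rKron_add (v : Fin a → ℂ) (M N : Matrix α β ℂ) :
    rKron v (M + N) = rKron v M + rKron v N := by
  ext i j
  simp only [rKron, Matrix.add_apply, mul_add]

lemma rKron_neg (v : Fin a → ℂ) (M : Matrix α β ℂ) : rKron v (-M) = -rKron v M := by
  ext i j
  simp only [rKron, Matrix.neg_apply, mul_neg]

lemma rKron_mul_oKron [Fintype β] (v w : Fin a → ℂ) (u : Fin b → ℂ)
    (M : Matrix α β ℂ) (N : Matrix β γ ℂ) :
    rKron v M * oKron w u N = (∑ i, v i * w i) • rKron u (M * N) := by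
  ext i ⟨j₁, j₂⟩
  simp only [rKron, oKron, Matrix.mul_apply, Matrix.smul_apply, Fintype.sum_prod_type,
    Finset.sum_mul, Finset.mul_sum, smul_eq_mul]
  rw [Finset.sum_comm]
  exact Finset.sum_congr rfl fun _ _ => Finset.sum_congr rfl fun _ _ => by ring

end Kronecker

lemma sum_Lam_mul_eVec_last {p : ℕ} (hp : 1 ≤ p) (lam : ℂ) :
    ∑ i, Lam p lam i * eVec p (p - 1) i = 1 := by
  have hlast : p - 1 < p := by omega
  rw [Fintype.sum_eq_single ⟨p - 1, hlast⟩ fun i hi => by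
    simp [eVec, Fin.val_ne_of_ne hi]]
  simp [Lam, eVec]

lemma rKron_Lam_mul_of_InL2 {d n : ℕ} {α : Type*} {Pc : Fin (d + 1) → Matrix (Fin n) (Fin n) ℂ}
    {X Y : Matrix (Fin d × Fin n) (Fin d × Fin n) ℂ} {s : Fin d → ℂ} (h : InL2 Pc X Y s)
    (lam : ℂ) (M : Matrix α (Fin n) ℂ) :
    rKron (Lam d lam) M * (lam • X + Y) = rKron s (M * polyEval Pc lam) := by
  rw [rKron_eq_mul_rKron_one, Matrix.mul_assoc, h lam, mul_rKron]

lemma rKron_Lam_mul_oKron_eVec_last {p b : ℕ} {α β γ : Type*} [Fintype β] (hp : 1 ≤ p)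
    (lam : ℂ) (u : Fin b → ℂ) (M : Matrix α β ℂ) (N : Matrix β γ ℂ) :
    rKron (Lam p lam) M * oKron (eVec p (p - 1)) u N = rKron u (M * N) := by
  rw [rKron_mul_oKron, sum_Lam_mul_eVec_last hp, one_smul]

theorem stmt9_general {m k n r : ℕ} (hm : 1 ≤ m) (hk : 1 ≤ k)
    (Ac : Fin (m + 1) → Matrix (Fin n) (Fin n) ℂ)
    (Dc : Fin (k + 1) → Matrix (Fin r) (Fin r) ℂ)
    (B : Matrix (Fin n) (Fin r) ℂ) (C : Matrix (Fin r) (Fin n) ℂ)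
    (XX YY : Matrix ((Fin m × Fin n) ⊕ (Fin k × Fin r)) ((Fin m × Fin n) ⊕ (Fin k × Fin r)) ℂ)
    (s : Fin m → ℂ) (z : Fin k → ℂ)
    (hL : InBL2 Ac Dc B C XX YY s z) :
    ∀ lam : ℂ, (polyEval Ac lam).det ≠ 0 →
      Matrix.fromCols (rKron (Lam m lam) (-(C * (polyEval Ac lam)⁻¹)))
          (rKron (Lam k lam) (1 : Matrix (Fin r) (Fin r) ℂ)) * (lam • XX + YY)
        = Matrix.fromCols 0 (rKron z (Gmat Ac Dc B C lam)) := by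
  obtain ⟨X, Y, P, Q, hA, hD, rfl, rfl⟩ := hL
  intro lam hdet
  have hinv : C * (polyEval Ac lam)⁻¹ * polyEval Ac lam = C :=
    Matrix.nonsing_inv_mul_cancel_right _ _ (isUnit_iff_ne_zero.mpr hdet)
  rw [Matrix.fromBlocks_smul, Matrix.fromBlocks_add, Matrix.fromCols_mul_fromBlocks,
    smul_zero, smul_zero, zero_add, zero_add]
  congr 1
  · rw [rKron_Lam_mul_of_InL2 hA, rKron_Lam_mul_oKron_eVec_last hk, Matrix.neg_mul, hinv,
      Matrix.one_mul, rKron_neg, neg_add_cancel]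
  · rw [Matrix.mul_neg, rKron_Lam_mul_oKron_eVec_last hm, rKron_Lam_mul_of_InL2 hD,
      Matrix.one_mul, Matrix.neg_mul, rKron_neg, neg_neg, Gmat, rKron_add, add_comm]

/-- if `𝕃(λ) = λ𝕏 + 𝕐` is in `𝕃₂(G)` with ansatz vectors `(s, z)`, then for every
`λ` with `det A(λ) ≠ 0`,
`[Λ_{m-1}(λ)ᵀ ⊗ (−C A(λ)⁻¹), Λ_{k-1}(λ)ᵀ ⊗ I_r] ⬝ 𝕃(λ) = [0, zᵀ ⊗ G(λ)]`. -/
theorem stmt9 {m k n r : ℕ} (hm : 1 ≤ m) (hk : 1 ≤ k) (hn : 1 ≤ n) (hr : 1 ≤ r)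
    (Ac : Fin (m + 1) → Matrix (Fin n) (Fin n) ℂ)
    (Dc : Fin (k + 1) → Matrix (Fin r) (Fin r) ℂ)
    (B : Matrix (Fin n) (Fin r) ℂ) (C : Matrix (Fin r) (Fin n) ℂ)
    (XX YY : Matrix ((Fin m × Fin n) ⊕ (Fin k × Fin r)) ((Fin m × Fin n) ⊕ (Fin k × Fin r)) ℂ)
    (s : Fin m → ℂ) (z : Fin k → ℂ)
    (hL : InBL2 Ac Dc B C XX YY s z) :
    ∀ lam : ℂ, (polyEval Ac lam).det ≠ 0 →
      Matrix.fromCols (rKron (Lam m lam) (-(C * (polyEval Ac lam)⁻¹)))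
          (rKron (Lam k lam) (1 : Matrix (Fin r) (Fin r) ℂ)) * (lam • XX + YY)
        = Matrix.fromCols 0 (rKron z (Gmat Ac Dc B C lam)) :=
  stmt9_general hm hk Ac Dc B C XX YY s z hL
end
end

section
/- Assume B ≠ 0 and C ≠ 0. If an (mn+kr)×(mn+kr) pencil 𝕃(λ) is in 𝕃₁(G) with ansatz vectors (v, w) and is also in 𝕃₂(G) with ansatz vectors (s, z), then there exist scalars α, β ∈ ℂ such that v = α e_m, z = α e_k, w = β e_k, and s = β e_m. -/
open Matrix Finset

noncomputable section

/-!
Both descriptions fix the same constant coefficient `𝕐` of the pencil, so its two off-diagonal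
blocks agree: `v e_kᵀ ⊗ B = e_m zᵀ ⊗ B` and `w e_mᵀ ⊗ C = e_k sᵀ ⊗ C`. Cancelling a nonzero entry
of `B` (resp. `C`) turns these into the rank-one identities `v e_kᵀ = e_m zᵀ` and `w e_mᵀ = e_k sᵀ`,
and a rank-one matrix written in both forms forces `v`, `z` (resp. `w`, `s`) to be the same
multiple of the standard basis vectors.
-/

lemma eVec_self {a i : ℕ} (hi : i < a) : eVec a i ⟨i, hi⟩ = 1 := by
  simp [eVec]

lemma mul_eq_mul_of_oKron_eq {a b : ℕ} {α β : Type*} {M : Matrix α β ℂ} (hM : M ≠ 0)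
    {v c : Fin a → ℂ} {w d : Fin b → ℂ} (h : oKron v w M = oKron c d M) (x : Fin a) (y : Fin b) :
    v x * w y = c x * d y := by
  obtain ⟨i, j, hij⟩ : ∃ i j, M i j ≠ 0 := by
    by_contra! hzero
    exact hM (Matrix.ext hzero)
  exact mul_right_cancel₀ hij (congrFun (congrFun h (x, i)) (y, j))

lemma eq_smul_eVec_of_mul_eVec_eq {a b i j : ℕ} (hi : i < a) (hj : j < b)
    {v : Fin a → ℂ} {z : Fin b → ℂ} (h : ∀ x y, v x * eVec b j y = eVec a i x * z y) :
    v = v ⟨i, hi⟩ • eVec a i ∧ z = v ⟨i, hi⟩ • eVec b j := by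
  have hvz : v ⟨i, hi⟩ = z ⟨j, hj⟩ := by
    simpa [eVec_self] using h ⟨i, hi⟩ ⟨j, hj⟩
  constructor
  · funext x
    have hx := h x ⟨j, hj⟩
    rw [eVec_self, mul_one] at hx
    rw [Pi.smul_apply, smul_eq_mul, hx, hvz, mul_comm]
  · funext y
    have hy := h ⟨i, hi⟩ y
    rw [eVec_self, one_mul] at hy
    rw [Pi.smul_apply, smul_eq_mul, hy]

theorem stmt14_general {m k n r : ℕ} (hm : 1 ≤ m) (hk : 1 ≤ k)
    (Ac : Fin (m + 1) → Matrix (Fin n) (Fin n) ℂ)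
    (Dc : Fin (k + 1) → Matrix (Fin r) (Fin r) ℂ)
    (B : Matrix (Fin n) (Fin r) ℂ) (C : Matrix (Fin r) (Fin n) ℂ)
    (hB : B ≠ 0) (hC : C ≠ 0)
    (XX YY : Matrix ((Fin m × Fin n) ⊕ (Fin k × Fin r)) ((Fin m × Fin n) ⊕ (Fin k × Fin r)) ℂ)
    (v : Fin m → ℂ) (w : Fin k → ℂ) (s : Fin m → ℂ) (z : Fin k → ℂ)
    (h1 : InBL1 Ac Dc B C XX YY v w) (h2 : InBL2 Ac Dc B C XX YY s z) :
    ∃ α β : ℂ, v = α • eVec m (m - 1) ∧ z = α • eVec k (k - 1) ∧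
      w = β • eVec k (k - 1) ∧ s = β • eVec m (m - 1) := by
  obtain ⟨-, Y, -, Q, -, -, -, hYY⟩ := h1
  obtain ⟨-, Y', -, Q', -, -, -, hYY'⟩ := h2
  obtain ⟨-, hBlockB, hBlockC, -⟩ := Matrix.fromBlocks_inj.mp (hYY.symm.trans hYY')
  have hm' : m - 1 < m := by omega
  have hk' : k - 1 < k := by omega
  obtain ⟨hv, hz⟩ := eq_smul_eVec_of_mul_eVec_eq hm' hk'
    (mul_eq_mul_of_oKron_eq hB (neg_inj.mp hBlockB))
  obtain ⟨hw, hs⟩ := eq_smul_eVec_of_mul_eVec_eq hk' hm'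
    (mul_eq_mul_of_oKron_eq hC hBlockC)
  exact ⟨_, _, hv, hz, hw, hs⟩

/-- if `B ≠ 0`, `C ≠ 0` and the pencil `λ𝕏 + 𝕐` is simultaneously in `𝕃₁(G)`
with ansatz vectors `(v, w)` and in `𝕃₂(G)` with ansatz vectors `(s, z)`, then there are
scalars `α, β` with `v = α e_m`, `z = α e_k`, `w = β e_k`, `s = β e_m`. -/
theorem stmt14 {m k n r : ℕ} (hm : 1 ≤ m) (hk : 1 ≤ k) (hn : 1 ≤ n) (hr : 1 ≤ r)
    (Ac : Fin (m + 1) → Matrix (Fin n) (Fin n) ℂ)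
    (Dc : Fin (k + 1) → Matrix (Fin r) (Fin r) ℂ)
    (B : Matrix (Fin n) (Fin r) ℂ) (C : Matrix (Fin r) (Fin n) ℂ)
    (hB : B ≠ 0) (hC : C ≠ 0)
    (XX YY : Matrix ((Fin m × Fin n) ⊕ (Fin k × Fin r)) ((Fin m × Fin n) ⊕ (Fin k × Fin r)) ℂ)
    (v : Fin m → ℂ) (w : Fin k → ℂ) (s : Fin m → ℂ) (z : Fin k → ℂ)
    (h1 : InBL1 Ac Dc B C XX YY v w) (h2 : InBL2 Ac Dc B C XX YY s z) :
    ∃ α β : ℂ, v = α • eVec m (m - 1) ∧ z = α • eVec k (k - 1) ∧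
      w = β • eVec k (k - 1) ∧ s = β • eVec m (m - 1) :=
  stmt14_general hm hk Ac Dc B C hB hC XX YY v w s z h1 h2
end
end

section
/- Assume the system is Hermitian: A_j* = A_j for all 0 ≤ j ≤ m, D_j* = D_j for all 0 ≤ j ≤ k, and C = B*, where * denotes the conjugate transpose (so that G(λ)* = G(conj(λ)) whenever det A(λ) ≠ 0). Let 𝕃(λ) = λ𝕏 + 𝕐 be an (mn+kr)×(mn+kr) pencil with 𝕏* = 𝕏 and 𝕐* = 𝕐, and let w ∈ ℂ^k be such that for every λ ∈ ℂ with det A(λ) ≠ 0, 𝕃(λ) · [Λ_{m-1}(λ) ⊗ (A(λ)^{-1} B); Λ_{k-1}(λ) ⊗ I_r] = [0; w ⊗ G(λ)]. Then for every λ ∈ ℂ with det A(λ) ≠ 0, [Λ_{m-1}(λ)ᵀ ⊗ (C A(λ)^{-1}), Λ_{k-1}(λ)ᵀ ⊗ I_r] · 𝕃(λ) = [0, conj(w)ᵀ ⊗ G(λ)], where conj(w) is the entrywise complex conjugate of w. -/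
open Matrix Finset

noncomputable section

/-! Take the conjugate transpose of the right ansatz identity at `conj λ`. Hermitian symmetry
turns `𝕃(conj λ)ᴴ` into `𝕃(λ)`, `G(conj λ)ᴴ` into `G(λ)` and `(A(conj λ)⁻¹ B)ᴴ` into `C A(λ)⁻¹`,
which is exactly the left ansatz identity at `λ`. -/

lemma conjTranspose_polyEval {d n : ℕ} {Pc : Fin (d + 1) → Matrix (Fin n) (Fin n) ℂ}
    (hP : ∀ j, (Pc j)ᴴ = Pc j) (lam : ℂ) :
    (polyEval Pc lam)ᴴ = polyEval Pc (star lam) := by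
  simp only [polyEval, conjTranspose_sum, conjTranspose_smul, hP, star_pow]

lemma star_Lam (p : ℕ) (lam : ℂ) : star (Lam p lam) = Lam p (star lam) := by
  funext i
  simp [Lam]

lemma conjTranspose_vKron {a : ℕ} {α β : Type*} (v : Fin a → ℂ) (M : Matrix α β ℂ) :
    (vKron v M)ᴴ = rKron (star v) Mᴴ := by
  ext j i
  simp [vKron, rKron, conjTranspose_apply]

lemma conjTranspose_Gmat {m k n r : ℕ} {Ac : Fin (m + 1) → Matrix (Fin n) (Fin n) ℂ}
    {Dc : Fin (k + 1) → Matrix (Fin r) (Fin r) ℂ} (hA : ∀ j, (Ac j)ᴴ = Ac j)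
    (hD : ∀ j, (Dc j)ᴴ = Dc j) (B : Matrix (Fin n) (Fin r) ℂ) (lam : ℂ) :
    (Gmat Ac Dc B Bᴴ lam)ᴴ = Gmat Ac Dc B Bᴴ (star lam) := by
  simp only [Gmat, conjTranspose_add, conjTranspose_mul, conjTranspose_nonsing_inv,
    conjTranspose_conjTranspose, conjTranspose_polyEval hA, conjTranspose_polyEval hD,
    Matrix.mul_assoc]

theorem stmt16_general {m k n r : ℕ}
    (Ac : Fin (m + 1) → Matrix (Fin n) (Fin n) ℂ)
    (Dc : Fin (k + 1) → Matrix (Fin r) (Fin r) ℂ)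
    (B : Matrix (Fin n) (Fin r) ℂ) (C : Matrix (Fin r) (Fin n) ℂ)
    (hAher : ∀ j, (Ac j)ᴴ = Ac j) (hDher : ∀ j, (Dc j)ᴴ = Dc j) (hCB : C = Bᴴ)
    (XX YY : Matrix ((Fin m × Fin n) ⊕ (Fin k × Fin r)) ((Fin m × Fin n) ⊕ (Fin k × Fin r)) ℂ)
    (hX : XXᴴ = XX) (hY : YYᴴ = YY) (w : Fin k → ℂ)
    (h : ∀ lam : ℂ, (polyEval Ac lam).det ≠ 0 →
      (lam • XX + YY) *
          Matrix.fromRows (vKron (Lam m lam) ((polyEval Ac lam)⁻¹ * B))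
            (vKron (Lam k lam) (1 : Matrix (Fin r) (Fin r) ℂ))
        = Matrix.fromRows 0 (vKron w (Gmat Ac Dc B C lam))) :
    ∀ lam : ℂ, (polyEval Ac lam).det ≠ 0 →
      Matrix.fromCols (rKron (Lam m lam) (C * (polyEval Ac lam)⁻¹))
          (rKron (Lam k lam) (1 : Matrix (Fin r) (Fin r) ℂ)) * (lam • XX + YY)
        = Matrix.fromCols 0 (rKron (star w) (Gmat Ac Dc B C lam)) := by
  subst hCB
  intro lam hdet
  have hdet' : (polyEval Ac (star lam)).det ≠ 0 := by
    rwa [← conjTranspose_polyEval hAher, det_conjTranspose, star_ne_zero]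
  have H := congrArg conjTranspose (h (star lam) hdet')
  simpa only [conjTranspose_mul, conjTranspose_fromRows_eq_fromCols_conjTranspose,
    conjTranspose_vKron, conjTranspose_add, conjTranspose_smul, hX, hY, star_star,
    conjTranspose_nonsing_inv, conjTranspose_polyEval hAher, conjTranspose_conjTranspose,
    conjTranspose_one, star_Lam, conjTranspose_zero, conjTranspose_Gmat hAher hDher] using H

/-- for a Hermitian system (`A_j* = A_j`, `D_j* = D_j`, `C = B*`), if the pencil
`𝕃(λ) = λ𝕏 + 𝕐` is Hermitian and satisfies the right ansatz identity with vector `w`, then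
`[Λ_{m-1}(λ)ᵀ ⊗ (C A(λ)⁻¹), Λ_{k-1}(λ)ᵀ ⊗ I_r] ⬝ 𝕃(λ) = [0, conj(w)ᵀ ⊗ G(λ)]`. -/
theorem stmt16 {m k n r : ℕ} (hm : 1 ≤ m) (hk : 1 ≤ k) (hn : 1 ≤ n) (hr : 1 ≤ r)
    (Ac : Fin (m + 1) → Matrix (Fin n) (Fin n) ℂ)
    (Dc : Fin (k + 1) → Matrix (Fin r) (Fin r) ℂ)
    (B : Matrix (Fin n) (Fin r) ℂ) (C : Matrix (Fin r) (Fin n) ℂ)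
    (hAher : ∀ j, (Ac j)ᴴ = Ac j) (hDher : ∀ j, (Dc j)ᴴ = Dc j) (hCB : C = Bᴴ)
    (XX YY : Matrix ((Fin m × Fin n) ⊕ (Fin k × Fin r)) ((Fin m × Fin n) ⊕ (Fin k × Fin r)) ℂ)
    (hX : XXᴴ = XX) (hY : YYᴴ = YY) (w : Fin k → ℂ)
    (h : ∀ lam : ℂ, (polyEval Ac lam).det ≠ 0 →
      (lam • XX + YY) *
          Matrix.fromRows (vKron (Lam m lam) ((polyEval Ac lam)⁻¹ * B))
            (vKron (Lam k lam) (1 : Matrix (Fin r) (Fin r) ℂ))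
        = Matrix.fromRows 0 (vKron w (Gmat Ac Dc B C lam))) :
    ∀ lam : ℂ, (polyEval Ac lam).det ≠ 0 →
      Matrix.fromCols (rKron (Lam m lam) (C * (polyEval Ac lam)⁻¹))
          (rKron (Lam k lam) (1 : Matrix (Fin r) (Fin r) ℂ)) * (lam • XX + YY)
        = Matrix.fromCols 0 (rKron (star w) (Gmat Ac Dc B C lam)) :=
  stmt16_general Ac Dc B C hAher hDher hCB XX YY hX hY w h
end
end
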